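/- arXiv:2109.00409 — 2 statements merged into one kernel-verified Lean document; each statement's English description precedes it below -/
import Mathlib

section
/- Let G ∈ 𝒢_n^2 whose strong component G* is the directed 2-cycle C₂ (two vertices joined by a symmetric pair of arcs, so both within-S outdegrees equal 1 and c₂(G*) = 2), and let 0 ≤ α < 1. Then α²·n + 2(1−α)² ≤ E_α(G) ≤ α²·((n−1)² + 1) + 2(1−α)². For 0 < α < 1, the lower bound is attained if and only if both hung trees are in-trees with roots at the cycle vertices, and the upper bound is attained if and only if one hung tree is a single vertex and the other is an out-star of size n−1 whose centre is its cycle vertex. -/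
open Polynomial Matrix Finset

/-- The outdegree of a vertex `v` of the digraph with adjacency matrix `A`. -/
noncomputable def outdeg {V : Type*} [Fintype V] (A : Matrix V V ℝ) (v : V) : ℝ := ∑ w, A v w

/-- The `A_α`-matrix `α·D⁺ + (1-α)·A` of a digraph with adjacency matrix `A`. -/
noncomputable def Aalpha {V : Type*} [Fintype V] [DecidableEq V] (α : ℝ) (A : Matrix V V ℝ) :
    Matrix V V ℝ :=
  α • Matrix.diagonal (outdeg A) + (1 - α) • A

/-- The spectral radius of a real square matrix: the maximum modulus of its complex
eigenvalues (roots of the characteristic polynomial over `ℂ`). -/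
noncomputable def specRad {V : Type*} [Fintype V] [DecidableEq V] (M : Matrix V V ℝ) : ℝ :=
  sSup {x : ℝ | ∃ z : ℂ, (M.map ((↑) : ℝ → ℂ)).charpoly.IsRoot z ∧ ‖z‖ = x}

/-- The `A_α` energy of a digraph: the sum of the squares of the eigenvalues of its
`A_α`-matrix, equivalently `trace (A_α(G)²)`. -/
noncomputable def Ealpha {V : Type*} [Fintype V] [DecidableEq V] (α : ℝ) (A : Matrix V V ℝ) : ℝ :=
  Matrix.trace (Aalpha α A * Aalpha α A)

/-- The outdegree of `s` within the vertex set `S` (the within-`S` outdegree `d*(s)`). -/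
noncomputable def dStar {V : Type*} [Fintype V] (A : Matrix V V ℝ) (S : Finset V) (s : V) : ℝ :=
  ∑ v ∈ S, A s v

/-- The size `n_s` of the fiber `r⁻¹(s)`. -/
def fibCard {V : Type*} [Fintype V] [DecidableEq V] (r : V → V) (s : V) : ℕ :=
  (Finset.univ.filter (fun v => r v = s)).card

/-- The underlying undirected graph of the induced subdigraph on the fiber `r⁻¹(s)`. -/
def fiberGraph {V : Type*} (A : Matrix V V ℝ) (r : V → V) (s : V) :
    SimpleGraph {v : V // r v = s} where
  Adj u w := u ≠ w ∧ (A u.1 w.1 = 1 ∨ A w.1 u.1 = 1)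
  symm := ⟨fun _ _ h => ⟨h.1.symm, h.2.symm⟩⟩
  loopless := ⟨fun _ h => h.1 rfl⟩

/-- The principal submatrix of `A` with rows and columns indexed by `S`. -/
def subm {V : Type*} (A : Matrix V V ℝ) (S : Finset V) :
    Matrix {v : V // v ∈ S} {v : V // v ∈ S} ℝ :=
  A.submatrix (fun x => x.1) (fun x => x.1)

/-- `c₂(G*) = trace(A*²)`, the number of closed walks of length 2 in the strong component. -/
noncomputable def c2star {V : Type*} [Fintype V] [DecidableEq V] (A : Matrix V V ℝ)
    (S : Finset V) : ℝ :=
  Matrix.trace (subm A S * subm A S)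

/-- Membership in the class `𝒢_n^m`: `A` is the adjacency matrix of a digraph of order `n`
with a unique strong component on the vertex set `S` of order `m`, with a directed tree
(the fiber `r⁻¹(s)`) hung on each vertex `s ∈ S`. -/
structure IsGnm {V : Type*} [Fintype V] [DecidableEq V] (A : Matrix V V ℝ) (S : Finset V)
    (r : V → V) (n m : ℕ) : Prop where
  zero_one : ∀ u v, A u v = 0 ∨ A u v = 1
  loopless : ∀ v, A v v = 0
  card_V : Fintype.card V = n
  card_S : S.card = m
  two_le_m : 2 ≤ m
  m_lt_n : m < n
  strong : ∀ u ∈ S, ∀ v ∈ S, Relation.ReflTransGen (fun a b => a ∈ S ∧ b ∈ S ∧ A a b = 1) u v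
  r_mem : ∀ v, r v ∈ S
  r_fix : ∀ s ∈ S, r s = s
  arc_cases : ∀ u v, A u v = 1 → (u ∈ S ∧ v ∈ S) ∨ r u = r v
  fiber_no_symm : ∀ u v, r u = r v → A u v = 1 → A v u = 0
  fiber_tree : ∀ s ∈ S, (fiberGraph A r s).IsTree

/-- Every hung tree is an in-tree with root at its vertex of `S`: inside each fiber the
root has outdegree `0` and every other vertex has outdegree `1`. -/
def InTrees {V : Type*} [Fintype V] [DecidableEq V] (A : Matrix V V ℝ) (S : Finset V)
    (r : V → V) : Prop :=
  (∀ v, v ∉ S → (∑ w ∈ Finset.univ.filter (fun w => r w = r v), A v w) = 1) ∧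
  (∀ s ∈ S, (∑ w ∈ Finset.univ.filter (fun w => r w = s), A s w) = 0)

/-- All hung trees are trivial except the one at `v`, which is an out-star with centre `v`. -/
def OutStarAt {V : Type*} [Fintype V] [DecidableEq V] (A : Matrix V V ℝ) (S : Finset V)
    (r : V → V) (v : V) : Prop :=
  (∀ s ∈ S, s ≠ v → fibCard r s = 1) ∧ (∀ u w, r u = v → A u w = 1 → u = v)

/-!
Since `A` is loopless, `E_α = tr(A_α²) = α² Σ d⁺(v)² + (1-α)² tr(A²)`, and `tr(A²)` counts
symmetric pairs of arcs, which occur only inside the strong component: for `C₂` it is `2`.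
A hung tree on `n_s` vertices carries `n_s - 1` arcs, so `Σ d⁺(v) = n`, and both cycle
vertices have `d⁺ ≥ 1`. Both bounds are then bounds on a sum of squares of nonnegative reals
with sum `n`: `Σ d² - n = Σ (d - 1)²` gives the lower bound, attained iff every outdegree is
`1`, i.e. every hung tree is an in-tree; splitting off the two cycle vertices gives
`Σ d² ≤ (n - 1)² + 1`, attained iff one cycle vertex has outdegree `1` and every other vertex
outside the cycle has outdegree `0`, i.e. the out-star configuration.
-/

section SumOfSquares

variable {ι : Type*} [Fintype ι] {d : ι → ℝ}

theorem sum_sq_sub_card_eq_sum_sub_one_sq (hd : ∑ v, d v = Fintype.card ι) :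
    ∑ v, d v ^ 2 - Fintype.card ι = ∑ v, (d v - 1) ^ 2 := by
  simp only [sub_sq, mul_one, one_pow, sum_add_distrib, sum_sub_distrib, ← mul_sum, hd]
  simp
  ring

theorem card_le_sum_sq (hd : ∑ v, d v = Fintype.card ι) : (Fintype.card ι : ℝ) ≤ ∑ v, d v ^ 2 :=
  sub_nonneg.1 <| sum_sq_sub_card_eq_sum_sub_one_sq hd ▸ sum_nonneg fun _ _ => sq_nonneg _

theorem sum_sq_eq_card_iff (hd : ∑ v, d v = Fintype.card ι) :
    ∑ v, d v ^ 2 = Fintype.card ι ↔ ∀ v, d v = 1 := by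
  rw [← sub_eq_zero, sum_sq_sub_card_eq_sum_sub_one_sq hd,
    sum_eq_zero_iff_of_nonneg fun v _ => sq_nonneg _]
  simp [sub_eq_zero]

theorem sum_eq_add_add_sum_erase_erase {M : Type*} [AddCommMonoid M] [DecidableEq ι] {s t : ι}
    (hst : s ≠ t) (f : ι → M) : ∑ v, f v = f s + f t + ∑ v ∈ (univ.erase s).erase t, f v := by
  rw [← add_sum_erase _ _ (mem_univ s), ← add_sum_erase _ _ (mem_erase.2 ⟨hst.symm, mem_univ t⟩),
    add_assoc]

-- Both slack terms on the left are nonnegative, so they vanish in the equality case.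
theorem sum_sq_add_le_of_one_le [DecidableEq ι] {s t : ι} (hst : s ≠ t) (hd : ∀ v, 0 ≤ d v)
    (hs : 1 ≤ d s) (ht : 1 ≤ d t) :
    ∑ v, d v ^ 2 + 2 * ((d s - 1) * (d t - 1) + ∑ v ∈ (univ.erase s).erase t, d v)
      ≤ (∑ v, d v - 1) ^ 2 + 1 := by
  have hrest : ∑ v ∈ (univ.erase s).erase t, d v ^ 2 ≤ (∑ v ∈ (univ.erase s).erase t, d v) ^ 2 :=
    sum_sq_le_sq_sum_of_nonneg fun v _ => hd v
  have hR : 0 ≤ ∑ v ∈ (univ.erase s).erase t, d v := sum_nonneg fun v _ => hd v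
  rw [sum_eq_add_add_sum_erase_erase hst d, sum_eq_add_add_sum_erase_erase hst (d · ^ 2)]
  nlinarith [mul_nonneg (sub_nonneg.2 hs) hR, mul_nonneg (sub_nonneg.2 ht) hR]

theorem sum_sq_le_of_one_le {s t : ι} (hst : s ≠ t) (hd : ∀ v, 0 ≤ d v) (hs : 1 ≤ d s)
    (ht : 1 ≤ d t) : ∑ v, d v ^ 2 ≤ (∑ v, d v - 1) ^ 2 + 1 := by
  classical
  have := sum_sq_add_le_of_one_le hst hd hs ht
  have : 0 ≤ ∑ v ∈ (univ.erase s).erase t, d v := sum_nonneg fun v _ => hd v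
  nlinarith [mul_nonneg (sub_nonneg.2 hs) (sub_nonneg.2 ht)]

theorem sum_sq_eq_iff_of_one_le {s t : ι} (hst : s ≠ t) (hd : ∀ v, 0 ≤ d v) (hs : 1 ≤ d s)
    (ht : 1 ≤ d t) :
    ∑ v, d v ^ 2 = (∑ v, d v - 1) ^ 2 + 1 ↔
      (d s = 1 ∨ d t = 1) ∧ ∀ v, v ≠ s → v ≠ t → d v = 0 := by
  classical
  constructor
  · intro heq
    have hle := sum_sq_add_le_of_one_le hst hd hs ht
    have hprod : 0 ≤ (d s - 1) * (d t - 1) := mul_nonneg (sub_nonneg.2 hs) (sub_nonneg.2 ht)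
    have hR : 0 ≤ ∑ v ∈ (univ.erase s).erase t, d v := sum_nonneg fun v _ => hd v
    have hR0 : ∑ v ∈ (univ.erase s).erase t, d v = 0 := by linarith
    refine ⟨?_, fun v hvs hvt => ?_⟩
    · have : (d s - 1) * (d t - 1) = 0 := by linarith
      rcases mul_eq_zero.1 this with h | h
      · exact Or.inl (by linarith)
      · exact Or.inr (by linarith)
    · exact (sum_eq_zero_iff_of_nonneg fun v _ => hd v).1 hR0 v (by simp [hvs, hvt])
  · rintro ⟨hone, hrest⟩
    have hrest' : ∀ v ∈ (univ.erase s).erase t, d v = 0 := fun v hv =>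
      hrest v (ne_of_mem_erase (mem_of_mem_erase hv)) (ne_of_mem_erase hv)
    rw [sum_eq_add_add_sum_erase_erase hst d, sum_eq_add_add_sum_erase_erase hst (d · ^ 2),
      sum_eq_zero hrest', sum_eq_zero fun v hv => by simp [hrest' v hv]]
    rcases hone with h | h <;> rw [h] <;> ring

end SumOfSquares

section Digraph

variable {V : Type*} [Fintype V] [DecidableEq V] {A : Matrix V V ℝ} {S : Finset V}
  {r : V → V}

theorem Ealpha_eq_of_loopless (α : ℝ) (hl : ∀ v, A v v = 0) :
    Ealpha α A = α ^ 2 * ∑ v, outdeg A v ^ 2 + (1 - α) ^ 2 * trace (A * A) := by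
  have hDA : trace (diagonal (outdeg A) * A) = 0 := by simp [trace, hl]
  have hAD : trace (A * diagonal (outdeg A)) = 0 := by simp [trace, hl]
  simp only [Ealpha, Aalpha, add_mul, mul_add, trace_add, smul_mul_smul_comm, trace_smul, hDA,
    hAD, diagonal_mul_diagonal, trace_diagonal, smul_eq_mul, mul_zero, add_zero, zero_add, sq,
    mul_sum]

noncomputable def fiberOutdeg (A : Matrix V V ℝ) (r : V → V) (v : V) : ℝ :=
  ∑ w ∈ univ.filter (fun w => r w = r v), A v w

theorem sum_sum_fiber_eq_fibCard_sub_one (h01 : ∀ u v, A u v = 0 ∨ A u v = 1)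
    (hasym : ∀ u v, r u = r v → A u v = 1 → A v u = 0) {p : V}
    (htree : (fiberGraph A r p).IsTree) :
    ∑ u ∈ univ.filter (fun v => r v = p), ∑ w ∈ univ.filter (fun v => r v = p), A u w
      = fibCard r p - 1 := by
  classical
  set G := fiberGraph A r p
  have hloop : ∀ u, A u u = 0 := fun u =>
    (h01 u u).resolve_right fun h => by simpa [h] using hasym u u rfl h
  have hadj : ∀ u w : {v // r v = p}, A u w + A w u = G.adjMatrix ℝ u w := by
    intro u w
    have hr : r u = r w := u.2.trans w.2.symm
    rw [SimpleGraph.adjMatrix_apply]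
    by_cases huw : u = w
    · simp [huw, hloop]
    · have := hasym _ _ hr
      have := hasym _ _ hr.symm
      rcases h01 u w with h | h <;> rcases h01 w u with h' | h' <;>
        simp_all [G, fiberGraph]
  have hdeg : ∀ u, ∑ w, G.adjMatrix ℝ u w = G.degree u := by
    intro u
    simpa [mulVec, dotProduct] using G.adjMatrix_mulVec_const_apply (α := ℝ) (a := 1) (v := u)
  have hcard : Fintype.card {v // r v = p} = fibCard r p := Fintype.card_subtype _
  have hedges := htree.card_edgeFinset
  have hsub : ∀ f : V → ℝ,
      ∑ u ∈ univ.filter (fun v => r v = p), f u = ∑ u : {v // r v = p}, f u :=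
    fun f => sum_subtype _ (by simp) f
  have hdouble :
      2 * ∑ u : {v // r v = p}, ∑ w : {v // r v = p}, A u w = 2 * (fibCard r p - 1) := by
    calc 2 * ∑ u : {v // r v = p}, ∑ w : {v // r v = p}, A u w
        = ∑ u : {v // r v = p}, ∑ w : {v // r v = p}, (A u w + A w u) := by
          rw [two_mul]
          nth_rw 2 [sum_comm]
          simp only [sum_add_distrib]
      _ = ∑ u, (G.degree u : ℝ) := by simp only [hadj, hdeg]
      _ = 2 * (fibCard r p - 1) := by
          rw [← Nat.cast_sum, G.sum_degrees_eq_twice_card_edges, ← hcard, ← hedges]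
          push_cast
          ring
  simp only [hsub]
  linarith

theorem c2star_eq_sum (A : Matrix V V ℝ) (S : Finset V) :
    c2star A S = ∑ u ∈ S, ∑ w ∈ S, A u w * A w u := by
  simp only [c2star, subm, trace, Matrix.diag, mul_apply, submatrix_apply]
  rw [← sum_coe_sort S]
  exact sum_congr rfl fun u _ => sum_coe_sort S fun w => A u w * A w u

theorem dStar_eq_of_complete (hl : ∀ v, A v v = 0) (hC : ∀ s ∈ S, ∀ t ∈ S, s ≠ t → A s t = 1)
    {v : V} (hv : v ∈ S) : dStar A S v = S.card - 1 := by
  rw [dStar, ← add_sum_erase _ _ hv, hl, zero_add,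
    sum_congr rfl fun w hw => hC v hv w (mem_of_mem_erase hw) (ne_of_mem_erase hw).symm]
  simp [card_erase_of_mem hv, Nat.cast_pred (card_pos.2 ⟨v, hv⟩)]

theorem c2star_eq_of_complete (hl : ∀ v, A v v = 0) (hC : ∀ s ∈ S, ∀ t ∈ S, s ≠ t → A s t = 1) :
    c2star A S = ∑ s ∈ S, dStar A S s := by
  rw [c2star_eq_sum]
  refine sum_congr rfl fun u hu => sum_congr rfl fun w hw => ?_
  by_cases huw : u = w
  · simp [huw, hl]
  · rw [hC w hw u hu (Ne.symm huw), mul_one]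

end Digraph

namespace IsGnm

variable {V : Type*} [Fintype V] [DecidableEq V] {A : Matrix V V ℝ} {S : Finset V} {r : V → V}
  {n m : ℕ}

theorem apply_nonneg (hG : IsGnm A S r n m) (u v : V) : 0 ≤ A u v := by
  rcases hG.zero_one u v with h | h <;> simp [h]

theorem outdeg_nonneg (hG : IsGnm A S r n m) (v : V) : 0 ≤ outdeg A v :=
  sum_nonneg fun w _ => hG.apply_nonneg v w

theorem apply_eq_zero_of_outdeg_eq_zero (hG : IsGnm A S r n m) {u : V} (hu : outdeg A u = 0)
    (w : V) : A u w = 0 :=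
  (sum_eq_zero_iff_of_nonneg fun w _ => hG.apply_nonneg u w).1 hu w (mem_univ w)

theorem apply_mul_apply_eq_zero (hG : IsGnm A S r n m) {u w : V} (huw : ¬(u ∈ S ∧ w ∈ S)) :
    A u w * A w u = 0 := by
  rcases hG.zero_one u w with h | h
  · simp [h]
  · rcases hG.arc_cases u w h with h' | h'
    · exact absurd h' huw
    · simp [hG.fiber_no_symm u w h' h]

theorem trace_mul_self (hG : IsGnm A S r n m) : trace (A * A) = c2star A S := by
  simp only [c2star_eq_sum, trace, Matrix.diag, mul_apply]
  rw [← sum_subset (subset_univ S) fun u _ hu =>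
    sum_eq_zero fun w _ => hG.apply_mul_apply_eq_zero fun h => hu h.1]
  exact sum_congr rfl fun u _ => (sum_subset (subset_univ S) fun w _ hw =>
    hG.apply_mul_apply_eq_zero fun h => hw h.2).symm

theorem outdeg_eq (hG : IsGnm A S r n m) (v : V) :
    outdeg A v = (if v ∈ S then dStar A S v else 0) + fiberOutdeg A r v := by
  have hsplit : ∀ w, A v w = (if v ∈ S ∧ w ∈ S then A v w else 0) +
      if r w = r v then A v w else 0 := by
    intro w
    by_cases hS : v ∈ S ∧ w ∈ S <;> by_cases hr : r w = r v
    · have hvw : v = w := by rw [← hG.r_fix v hS.1, ← hG.r_fix w hS.2, hr]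
      simp [hvw, hG.loopless]
    · simp [hS, hr]
    · simp [hS, hr]
    · rcases hG.zero_one v w with h | h
      · simp [h]
      · rcases hG.arc_cases v w h with h' | h'
        · exact absurd h' hS
        · exact absurd h'.symm hr
  rw [outdeg, sum_congr rfl fun w _ => hsplit w, sum_add_distrib, fiberOutdeg, sum_filter]
  by_cases hv : v ∈ S <;> simp [hv, dStar, sum_ite_mem]

theorem sum_fiberOutdeg (hG : IsGnm A S r n m) : ∑ v, fiberOutdeg A r v = (n : ℝ) - m := by
  have hfib : ∀ p ∈ S, ∑ v ∈ univ.filter (fun v => r v = p), fiberOutdeg A r v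
      = (fibCard r p : ℝ) - 1 := fun p hp => by
    rw [← sum_sum_fiber_eq_fibCard_sub_one hG.zero_one hG.fiber_no_symm (hG.fiber_tree p hp)]
    exact sum_congr rfl fun v hv => by rw [fiberOutdeg, (mem_filter.1 hv).2]
  have hcard : ∑ p ∈ S, (fibCard r p : ℝ) = n := by
    rw [← hG.card_V, ← card_univ, card_eq_sum_card_fiberwise fun v _ => hG.r_mem v]
    push_cast [fibCard]
    rfl
  rw [← sum_fiberwise_of_maps_to fun v _ => hG.r_mem v, sum_congr rfl hfib, sum_sub_distrib,
    hcard, sum_const, hG.card_S, nsmul_one]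

theorem sum_outdeg (hG : IsGnm A S r n m) :
    ∑ v, outdeg A v = ∑ s ∈ S, dStar A S s + ((n : ℝ) - m) := by
  simp only [hG.outdeg_eq, sum_add_distrib, sum_ite_mem, univ_inter, hG.sum_fiberOutdeg]

theorem dStar_le_outdeg (hG : IsGnm A S r n m) {v : V} (hv : v ∈ S) :
    dStar A S v ≤ outdeg A v := by
  rw [hG.outdeg_eq, if_pos hv, le_add_iff_nonneg_right]
  exact sum_nonneg fun w _ => hG.apply_nonneg v w

theorem inTrees_iff (hG : IsGnm A S r n m) (hS : ∀ s ∈ S, dStar A S s = 1) :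
    InTrees A S r ↔ ∀ v, outdeg A v = 1 := by
  have hout : ∀ s ∈ S, outdeg A s = 1 + ∑ w ∈ univ.filter (fun w => r w = s), A s w :=
    fun s hs => by rw [hG.outdeg_eq, if_pos hs, hS s hs, fiberOutdeg, hG.r_fix s hs]
  have hout' : ∀ v ∉ S, outdeg A v = ∑ w ∈ univ.filter (fun w => r w = r v), A v w :=
    fun v hv => by rw [hG.outdeg_eq, if_neg hv, zero_add, fiberOutdeg]
  constructor
  · rintro ⟨hleaf, hroot⟩ v
    by_cases hv : v ∈ S
    · rw [hout v hv, hroot v hv, add_zero]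
    · rw [hout' v hv, hleaf v hv]
  · intro h
    exact ⟨fun v hv => hout' v hv ▸ h v, fun s hs => by linarith [hout s hs, h s]⟩

theorem outStarAt_iff {p q : V} (hG : IsGnm A S r n m) (hS : S = {p, q}) (hpq : p ≠ q)
    (hq : dStar A S q = 1) :
    OutStarAt A S r p ↔ outdeg A q = 1 ∧ ∀ v, v ≠ p → v ≠ q → outdeg A v = 0 := by
  subst hS
  have hrp : r p = p := hG.r_fix p (by simp)
  have hrq : r q = q := hG.r_fix q (by simp)
  have hq_mem : q ∈ univ.filter (fun v => r v = q) := by simp [hrq]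
  have hout_q : outdeg A q = 1 + ∑ w ∈ univ.filter (fun w => r w = q), A q w := by
    rw [hG.outdeg_eq, if_pos (by simp), hq, fiberOutdeg, hrq]
  constructor
  · rintro ⟨hsingle, hstar⟩
    have hfib_q : univ.filter (fun v => r v = q) = {q} := by
      obtain ⟨a, ha⟩ := card_eq_one.1 (hsingle q (by simp) hpq.symm)
      rw [ha, mem_singleton] at hq_mem
      rw [ha, hq_mem]
    refine ⟨by rw [hout_q, hfib_q, sum_singleton, hG.loopless, add_zero], fun v hvp hvq => ?_⟩
    have hrv : r v = p := by
      refine (by simpa using hG.r_mem v : r v = p ∨ r v = q).resolve_right fun h => hvq ?_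
      simpa [hfib_q] using (mem_filter.2 ⟨mem_univ v, h⟩ : v ∈ univ.filter (fun v => r v = q))
    exact sum_eq_zero fun w _ => (hG.zero_one v w).resolve_right fun h => hvp (hstar v w hrv h)
  · rintro ⟨hq1, hrest⟩
    have hne_q : ∀ u, r u = p → u ≠ q := fun u hu huq => hpq (by rw [← hu, huq, hrq])
    refine ⟨fun s hs hsp => ?_, fun u w hu huw => ?_⟩
    · obtain rfl : s = q := by simpa [hsp] using hs
      have hzero : ∀ u ∈ univ.filter (fun v => r v = s),
          ∑ w ∈ univ.filter (fun v => r v = s), A u w = 0 := by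
        intro u hu
        by_cases hus : u = s
        · subst hus
          linarith
        · have hup : u ≠ p := fun h => hpq (by rw [← hrp, ← h, (mem_filter.1 hu).2])
          exact sum_eq_zero fun w _ => hG.apply_eq_zero_of_outdeg_eq_zero (hrest u hup hus) w
      have := sum_sum_fiber_eq_fibCard_sub_one hG.zero_one hG.fiber_no_symm
        (hG.fiber_tree s (by simp))
      rw [sum_eq_zero hzero] at this
      exact_mod_cast (by linarith : (fibCard r s : ℝ) = 1)
    · by_contra hup
      simpa [huw] using hG.apply_eq_zero_of_outdeg_eq_zero (hrest u hup (hne_q u hu)) w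

end IsGnm

theorem stmt14_general {V : Type*} [Fintype V] [DecidableEq V] (A : Matrix V V ℝ) (S : Finset V)
    (r : V → V) (n : ℕ) (hG : IsGnm A S r n 2)
    (hC2 : ∀ s ∈ S, ∀ t ∈ S, s ≠ t → A s t = 1)
    (α : ℝ) :
    (α ^ 2 * (n : ℝ) + 2 * (1 - α) ^ 2 ≤ Ealpha α A ∧
      Ealpha α A ≤ α ^ 2 * (((n : ℝ) - 1) ^ 2 + 1) + 2 * (1 - α) ^ 2) ∧
    (0 < α →
      ((Ealpha α A = α ^ 2 * (n : ℝ) + 2 * (1 - α) ^ 2 ↔ InTrees A S r) ∧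
       (Ealpha α A = α ^ 2 * (((n : ℝ) - 1) ^ 2 + 1) + 2 * (1 - α) ^ 2 ↔
          ∃ v ∈ S, OutStarAt A S r v))) := by
  obtain ⟨s, t, hst, rfl⟩ := card_eq_two.1 hG.card_S
  have hdStar : ∀ v ∈ ({s, t} : Finset V), dStar A {s, t} v = 1 := fun v hv => by
    rw [dStar_eq_of_complete hG.loopless hC2 hv, hG.card_S]
    norm_num
  have hE : Ealpha α A = α ^ 2 * ∑ v, outdeg A v ^ 2 + 2 * (1 - α) ^ 2 := by
    rw [Ealpha_eq_of_loopless α hG.loopless, hG.trace_mul_self,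
      c2star_eq_of_complete hG.loopless hC2, sum_congr rfl hdStar, sum_pair hst]
    ring
  have hsum : ∑ v, outdeg A v = Fintype.card V := by
    rw [hG.sum_outdeg, sum_congr rfl hdStar, sum_pair hst, hG.card_V]
    ring
  have hn : (n : ℝ) = Fintype.card V := by rw [hG.card_V]
  have hs : 1 ≤ outdeg A s := hdStar s (by simp) ▸ hG.dStar_le_outdeg (by simp)
  have ht : 1 ≤ outdeg A t := hdStar t (by simp) ▸ hG.dStar_le_outdeg (by simp)
  refine ⟨⟨?_, ?_⟩, fun hα => ?_⟩
  · rw [hE, hn]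
    gcongr
    exact card_le_sum_sq hsum
  · rw [hE, hn, ← hsum]
    gcongr
    exact sum_sq_le_of_one_le hst hG.outdeg_nonneg hs ht
  have hcancel : ∀ x, Ealpha α A = α ^ 2 * x + 2 * (1 - α) ^ 2 ↔ ∑ v, outdeg A v ^ 2 = x :=
    fun x => by rw [hE, add_left_inj, mul_right_inj' (by positivity)]
  have hswap : (∀ v, v ≠ t → v ≠ s → outdeg A v = 0) ↔ ∀ v, v ≠ s → v ≠ t → outdeg A v = 0 :=
    forall_congr' fun _ => imp.swap
  refine ⟨by rw [hcancel, hn, sum_sq_eq_card_iff hsum, hG.inTrees_iff hdStar], ?_⟩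
  rw [hcancel, hn, ← hsum, sum_sq_eq_iff_of_one_le hst hG.outdeg_nonneg hs ht]
  simp only [exists_mem_insert, mem_singleton, exists_eq_left]
  rw [hG.outStarAt_iff rfl hst (hdStar t (by simp)),
    hG.outStarAt_iff (pair_comm s t) hst.symm (hdStar s (by simp)), hswap]
  tauto

/-- For `G ∈ 𝒢_n^2` whose strong component is the symmetric `2`-cycle `C₂`,
`α²n + 2(1-α)² ≤ E_α(G) ≤ α²((n-1)² + 1) + 2(1-α)²`; for `0 < α < 1` the lower bound is
attained iff both hung trees are in-trees, and the upper bound iff one hung tree is a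
single vertex and the other is an out-star of size `n-1` centred at its cycle vertex. -/
theorem stmt14 {V : Type*} [Fintype V] [DecidableEq V] (A : Matrix V V ℝ) (S : Finset V)
    (r : V → V) (n : ℕ) (hG : IsGnm A S r n 2)
    (hC2 : ∀ s ∈ S, ∀ t ∈ S, s ≠ t → A s t = 1)
    (α : ℝ) (hα0 : 0 ≤ α) (hα1 : α < 1) :
    (α ^ 2 * (n : ℝ) + 2 * (1 - α) ^ 2 ≤ Ealpha α A ∧
      Ealpha α A ≤ α ^ 2 * (((n : ℝ) - 1) ^ 2 + 1) + 2 * (1 - α) ^ 2) ∧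
    (0 < α →
      ((Ealpha α A = α ^ 2 * (n : ℝ) + 2 * (1 - α) ^ 2 ↔ InTrees A S r) ∧
       (Ealpha α A = α ^ 2 * (((n : ℝ) - 1) ^ 2 + 1) + 2 * (1 - α) ^ 2 ↔
          ∃ v ∈ S, OutStarAt A S r v))) :=
  stmt14_general A S r n hG hC2 α
end

section
/- Let G ∈ 𝒢_n^m with strong-component vertex set S, let 0 ≤ α < 1, and let M_S be the principal submatrix of A_α(G) with rows and columns indexed by S. Then the A_α spectral radius of G satisfies ρ_α(G) = max { ρ(M_S), α · max_{v∈V∖S} d⁺(v) }, where d⁺(v) is the outdegree of v in G. -/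
open Polynomial Matrix Finset

/-!
Inside a hung tree the arcs orient a tree without symmetric pairs, so they form an acyclic
relation and admit a height increasing along every arc. Ordering the vertices by this height,
with the strong component `S` as a single block, makes `A_α(G)` block triangular, and every
block off `S` is diagonal with entries `α d⁺(v)`. Hence the characteristic polynomial of
`A_α(G)` is `charpoly(M_S) · ∏_{v ∉ S} (X - α d⁺(v))`, and the largest root modulus is the
larger of the two contributions.
-/

lemma Real.sSup_union_of_nonneg {s t : Set ℝ} (hs : BddAbove s) (ht : BddAbove t)
    (hs₀ : ∀ x ∈ s, 0 ≤ x) (ht₀ : ∀ x ∈ t, 0 ≤ x) :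
    sSup (s ∪ t) = max (sSup s) (sSup t) := by
  rcases s.eq_empty_or_nonempty with rfl | hs'
  · simp [Real.sSup_nonneg ht₀]
  rcases t.eq_empty_or_nonempty with rfl | ht'
  · simp [Real.sSup_nonneg hs₀]
  exact csSup_union hs hs' ht ht'

lemma exists_height_of_not_transGen_self {V : Type*} [Fintype V] {R : V → V → Prop}
    (hR : ∀ v, ¬ Relation.TransGen R v v) : ∃ g : V → ℕ, ∀ u v, R u v → g u < g v := by
  classical
  refine ⟨fun v => #{x | Relation.TransGen R x v}, fun u v huv => card_lt_card ⟨?_, ?_⟩⟩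
  · intro x hx
    simp only [mem_filter, mem_univ, true_and] at hx ⊢
    exact hx.tail huv
  · intro hsub
    have hu : u ∈ ({x | Relation.TransGen R x v} : Finset V) := by simpa using .single huv
    simpa using hR u (by simpa using hsub hu)

lemma Relation.TransGen.subtype {α : Type*} {p : α → Prop} {R : α → α → Prop}
    (hR : ∀ a b, R a b → (p a ↔ p b)) {a b : α} (h : Relation.TransGen R a b) (ha : p a)
    (hb : p b) : Relation.TransGen (fun x y : Subtype p => R x y) ⟨a, ha⟩ ⟨b, hb⟩ := by
  induction h with
  | single hab => exact .single hab
  | tail _ hbc ih => exact .tail (ih ((hR _ _ hbc).2 hb)) hbc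

namespace SimpleGraph

lemma exists_walk_of_reflTransGen {W : Type*} {G : SimpleGraph W} {R : W → W → Prop}
    (hRG : ∀ u v, R u v → G.Adj u v) {u v : W} (h : Relation.ReflTransGen R u v) :
    ∃ w : G.Walk u v, ∀ d ∈ w.darts, R d.fst d.snd := by
  induction h with
  | refl => exact ⟨.nil, by simp⟩
  | tail _ hbc ih =>
    obtain ⟨w, hw⟩ := ih
    refine ⟨w.concat (hRG _ _ hbc), fun d hd => ?_⟩
    rw [Walk.darts_concat, List.concat_eq_append, List.mem_append, List.mem_singleton] at hd
    rcases hd with hd | rfl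
    · exact hw d hd
    · exact hbc

/-- A directed cycle of an asymmetric orientation of an acyclic graph would give two distinct
paths between consecutive vertices: the arc itself and the rest of the cycle. -/
lemma IsAcyclic.not_transGen_self {W : Type*} {G : SimpleGraph W} (hG : G.IsAcyclic)
    {R : W → W → Prop} (hRG : ∀ u v, R u v → G.Adj u v) (hR : ∀ u v, R u v → ¬ R v u) (v : W) :
    ¬ Relation.TransGen R v v := by
  classical
  intro hvv
  obtain ⟨u, hvu, huv⟩ := Relation.TransGen.head'_iff.mp hvv
  obtain ⟨w, hw⟩ := exists_walk_of_reflTransGen hRG huv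
  have hpath : w.bypass = (Walk.cons (hRG v u hvu) .nil).reverse :=
    congrArg Subtype.val ((isAcyclic_iff_subsingleton_path.mp hG u v).elim
      ⟨w.bypass, w.bypass_isPath⟩ (Path.singleton (hRG v u hvu)).reverse)
  have hdart : (⟨(u, v), (hRG v u hvu).symm⟩ : G.Dart) ∈ w.darts := by
    apply w.darts_bypass_subset_darts
    simp [hpath]
  exact hR v u hvu (hw _ hdart)

end SimpleGraph

lemma Matrix.charpoly_eq_charpoly_submatrix_mul_prod {R ι α : Type*} [CommRing R] [Fintype ι]
    [DecidableEq ι] [LinearOrder α] {M : Matrix ι ι R} {b : ι → α} (hM : M.BlockTriangular b)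
    {S : Finset ι} (hS : S.Nonempty) {a₀ : α} (hb : ∀ i, b i = a₀ ↔ i ∈ S)
    (hdiag : ∀ i j, i ≠ j → b i = b j → i ∉ S → M i j = 0) :
    M.charpoly = (M.submatrix ((↑) : S → ι) (↑)).charpoly *
      ∏ i ∈ univ.filter (· ∉ S), (X - C (M i i)) := by
  have ha₀ : a₀ ∈ univ.image b := by
    obtain ⟨s, hs⟩ := hS
    exact mem_image.2 ⟨s, mem_univ s, (hb s).2 hs⟩
  rw [hM.charpoly, ← mul_prod_erase _ _ ha₀]
  congr 1
  · rw [← charpoly_reindex (Equiv.subtypeEquivRight hb)]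
    rfl
  · have hblock : ∀ a ∈ (univ.image b).erase a₀, (M.toSquareBlock b a).charpoly =
        ∏ i ∈ (univ.filter (· ∉ S)).filter (b · = a), (X - C (M i i)) := by
      intro a ha
      have hdiagonal : M.toSquareBlock b a = diagonal fun i : {i // b i = a} => M i i := by
        ext i j
        obtain rfl | hij := eq_or_ne i j
        · simp [toSquareBlock_def]
        rw [diagonal_apply_ne _ hij]
        have hiS : i.1 ∉ S := fun hi => (mem_erase.1 ha).1 (i.2.symm.trans ((hb i).2 hi))
        exact hdiag i j (Subtype.coe_ne_coe.2 hij) (i.2.trans j.2.symm) hiS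
      rw [hdiagonal, charpoly_diagonal]
      refine (prod_subtype _ (fun i => ?_) (fun i => X - C (M i i))).symm
      simp only [mem_filter, mem_univ, true_and, and_iff_right_iff_imp]
      rintro rfl hiS
      exact (mem_erase.1 ha).1 ((hb i).2 hiS)
    rw [prod_congr rfl hblock, prod_fiberwise_of_maps_to]
    intro i hi
    simp only [mem_filter, mem_univ, true_and] at hi
    exact mem_erase.2 ⟨fun h => hi ((hb i).1 h), mem_image_of_mem b (mem_univ i)⟩

lemma Aalpha_apply_of_ne {V : Type*} [Fintype V] [DecidableEq V] (α : ℝ) (A : Matrix V V ℝ)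
    {i j : V} (hij : i ≠ j) : Aalpha α A i j = (1 - α) * A i j := by
  simp [Aalpha, diagonal_apply_ne _ hij]

lemma Aalpha_apply_self {V : Type*} [Fintype V] [DecidableEq V] (α : ℝ) {A : Matrix V V ℝ}
    {v : V} (hv : A v v = 0) : Aalpha α A v v = α * outdeg A v := by
  simp [Aalpha, hv]

/-- `specRad M` is the supremum of `rootNorms` of the complexified characteristic polynomial
of `M`. -/
def rootNorms (p : ℂ[X]) : Set ℝ := {x | ∃ z : ℂ, p.IsRoot z ∧ ‖z‖ = x}

lemma rootNorms_mul (p q : ℂ[X]) : rootNorms (p * q) = rootNorms p ∪ rootNorms q := by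
  ext x
  simp only [rootNorms, IsRoot.def, eval_mul, mul_eq_zero, Set.mem_ofPred_eq, Set.mem_union]
  constructor
  · rintro ⟨z, hz | hz, rfl⟩
    exacts [Or.inl ⟨z, hz, rfl⟩, Or.inr ⟨z, hz, rfl⟩]
  · rintro (⟨z, hz, rfl⟩ | ⟨z, hz, rfl⟩)
    exacts [⟨z, Or.inl hz, rfl⟩, ⟨z, Or.inr hz, rfl⟩]

lemma rootNorms_prod_X_sub_C {ι : Type*} (T : Finset ι) (d : ι → ℂ) :
    rootNorms (∏ i ∈ T, (X - C (d i))) = (fun i => ‖d i‖) '' T := by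
  ext x
  simp [rootNorms, eval_prod, prod_eq_zero_iff, sub_eq_zero]

lemma rootNorms_nonneg {p : ℂ[X]} {x : ℝ} (hx : x ∈ rootNorms p) : 0 ≤ x := by
  obtain ⟨z, -, rfl⟩ := hx
  exact norm_nonneg z

lemma bddAbove_rootNorms {p : ℂ[X]} (hp : p ≠ 0) : BddAbove (rootNorms p) :=
  ((finite_setOfPred_isRoot hp).image (‖·‖)).bddAbove

lemma specRad_eq_max_of_charpoly_eq_mul_prod {V W : Type*} [Fintype V] [DecidableEq V]
    [Fintype W] [DecidableEq W] {M : Matrix V V ℝ} {N : Matrix W W ℝ} {T : Finset V}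
    {d : V → ℝ} (hd : ∀ v ∈ T, 0 ≤ d v)
    (h : M.charpoly = N.charpoly * ∏ v ∈ T, (X - C (d v))) :
    specRad M = max (specRad N) (sSup (d '' T)) := by
  have hcharpoly : (M.map ((↑) : ℝ → ℂ)).charpoly =
      (N.map ((↑) : ℝ → ℂ)).charpoly * ∏ v ∈ T, (X - C (d v : ℂ)) := by
    simp only [← Complex.coe_algebraMap, charpoly_map, h, Polynomial.map_mul,
      Polynomial.map_prod, Polynomial.map_sub, map_X, map_C]
  have himage : (fun v => ‖(d v : ℂ)‖) '' T = d '' T :=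
    Set.image_congr fun v hv => by rw [Complex.norm_real, Real.norm_of_nonneg (hd v hv)]
  change sSup (rootNorms _) = max (sSup (rootNorms _)) _
  rw [hcharpoly, rootNorms_mul, rootNorms_prod_X_sub_C, himage]
  refine Real.sSup_union_of_nonneg (bddAbove_rootNorms (charpoly_monic _).ne_zero)
    (T.finite_toSet.image d).bddAbove (fun _ => rootNorms_nonneg) ?_
  rintro _ ⟨v, hv, rfl⟩
  exact hd v hv

section Gnm

variable {V : Type*} [DecidableEq V] {A : Matrix V V ℝ} {S : Finset V} {r : V → V}

def fiberArc (A : Matrix V V ℝ) (r : V → V) (u w : V) : Prop := A u w = 1 ∧ r u = r w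

/-- A block index making `A_α(G)` block lower triangular with the strong component as one
block: `g` increases along the arcs of every hung tree, and the odd values off `S` keep
those vertices away from the index `0` of `S`. -/
def blockIndex (S : Finset V) (r : V → V) (g : V → ℕ) (v : V) : ℤ :=
  if v ∈ S then 0 else 2 * ((g v : ℤ) - g (r v)) + 1

lemma blockIndex_eq_zero_iff (g : V → ℕ) (v : V) : blockIndex S r g v = 0 ↔ v ∈ S := by
  unfold blockIndex
  split_ifs with hv
  · exact iff_of_true rfl hv
  · exact iff_of_false (by omega) hv

namespace IsGnm

variable [Fintype V] {n m : ℕ}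
variable (hG : IsGnm A S r n m)
include hG

lemma nonempty : S.Nonempty := by
  rw [← card_pos, hG.card_S]
  exact zero_lt_two.trans_le hG.two_le_m

lemma not_transGen_fiberArc_self (v : V) : ¬ Relation.TransGen (fiberArc A r) v v := by
  intro hvv
  have hfiber : ∀ a b, fiberArc A r a b → (r a = r v ↔ r b = r v) := fun a b hab => by
    rw [hab.2]
  refine (hG.fiber_tree (r v) (hG.r_mem v)).isAcyclic.not_transGen_self
    (R := fun x y => fiberArc A r x y) (fun x y hxy => ⟨?_, .inl hxy.1⟩)
    (fun x y hxy hyx => ?_) ⟨v, rfl⟩ (hvv.subtype hfiber rfl rfl)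
  · rintro rfl
    simpa [hG.loopless] using hxy.1
  · simpa [hG.fiber_no_symm x y hxy.2 hxy.1] using hyx.1

lemma blockIndex_lt {g : V → ℕ} (hg : ∀ u w, fiberArc A r u w → g u < g w) {i j : V}
    (hij : A i j = 1) (hS : ¬ (i ∈ S ∧ j ∈ S)) : blockIndex S r g i < blockIndex S r g j := by
  have hr : r i = r j := (hG.arc_cases i j hij).resolve_left hS
  have hlt := hg i j ⟨hij, hr⟩
  unfold blockIndex
  split_ifs with hi hj hj
  · exact absurd ⟨hi, hj⟩ hS
  · rw [← hr, hG.r_fix i hi]; omega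
  · rw [hr, hG.r_fix j hj]; omega
  · rw [hr]; omega

lemma Aalpha_eq_zero {g : V → ℕ} (hg : ∀ u w, fiberArc A r u w → g u < g w) (α : ℝ) {i j : V}
    (hij : i ≠ j) (hb : blockIndex S r g j ≤ blockIndex S r g i) (hS : ¬ (i ∈ S ∧ j ∈ S)) :
    Aalpha α A i j = 0 := by
  rw [Aalpha_apply_of_ne α A hij]
  rcases hG.zero_one i j with h | h
  · rw [h, mul_zero]
  · exact absurd (hG.blockIndex_lt hg h hS) hb.not_gt

lemma charpoly_Aalpha (α : ℝ) : (Aalpha α A).charpoly =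
    (subm (Aalpha α A) S).charpoly * ∏ v ∈ univ.filter (· ∉ S), (X - C (α * outdeg A v)) := by
  obtain ⟨g, hg⟩ := exists_height_of_not_transGen_self hG.not_transGen_fiberArc_self
  have hblock : (Aalpha α A).BlockTriangular (blockIndex S r g) := by
    intro i j hji
    refine hG.Aalpha_eq_zero hg α (by rintro rfl; exact hji.false) hji.le fun hS => ?_
    rw [(blockIndex_eq_zero_iff g i).2 hS.1, (blockIndex_eq_zero_iff g j).2 hS.2] at hji
    exact hji.false
  rw [charpoly_eq_charpoly_submatrix_mul_prod hblock hG.nonempty (blockIndex_eq_zero_iff g)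
    fun i j hij hb hi => hG.Aalpha_eq_zero hg α hij hb.ge fun hS => hi hS.1]
  congr 1
  exact prod_congr rfl fun v _ => by rw [Aalpha_apply_self α (hG.loopless v)]

lemma outdeg_nonneg_s17 (v : V) : 0 ≤ outdeg A v :=
  sum_nonneg fun w _ => by rcases hG.zero_one v w with h | h <;> simp [h]

end IsGnm

end Gnm

open scoped Pointwise in
theorem stmt17_general {V : Type*} [Fintype V] [DecidableEq V] (A : Matrix V V ℝ) (S : Finset V)
    (r : V → V) (n m : ℕ) (hG : IsGnm A S r n m) (α : ℝ) (hα0 : 0 ≤ α) :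
    specRad (Aalpha α A) =
      max (specRad (subm (Aalpha α A) S))
        (α * sSup (outdeg A '' {v : V | v ∉ S})) := by
  rw [specRad_eq_max_of_charpoly_eq_mul_prod
    (fun v _ => mul_nonneg hα0 (hG.outdeg_nonneg_s17 v)) (hG.charpoly_Aalpha α)]
  have himage : (fun v => α * outdeg A v) '' ↑(univ.filter (· ∉ S)) =
      α • (outdeg A '' {v : V | v ∉ S}) := by
    rw [← Set.image_smul, Set.image_image, coe_filter]
    simp
  rw [himage, Real.sSup_smul_of_nonneg hα0, smul_eq_mul]

/-- For `G ∈ 𝒢_n^m`, the `A_α` spectral radius of `G` equals the maximum of the spectral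
radius of the principal submatrix of `A_α(G)` on `S` and `α` times the maximal outdegree
of a vertex outside `S`. -/
theorem stmt17 {V : Type*} [Fintype V] [DecidableEq V] (A : Matrix V V ℝ) (S : Finset V)
    (r : V → V) (n m : ℕ) (hG : IsGnm A S r n m) (α : ℝ) (hα0 : 0 ≤ α) (hα1 : α < 1) :
    specRad (Aalpha α A) =
      max (specRad (subm (Aalpha α A) S))
        (α * sSup (outdeg A '' {v : V | v ∉ S})) :=
  stmt17_general A S r n m hG α hα0
end
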